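/- arXiv:1506.07078 — 2 statements merged into one kernel-verified Lean document; each statement's English description precedes it below -/
import Mathlib

section
/- Let Γ be a finite connected directed acyclic graph with k ≥ 2 vertices and 2k−3 edges, such that all vertices except possibly one have out-degree at most one, and no vertex has exactly one incoming and exactly one outgoing edge. Then k = 2, i.e., Γ is the graph with two vertices joined by a single edge. -/
/-!
Let `n = |V|`. Out-degrees are bounded by `n - 1` at `v₀` and by `1` elsewhere, and an acyclic
graph has a sink `z`, which cannot be `v₀` once `n ≥ 3`. Hence `2n - 3` edges force `v₀` to point
to every other vertex and every vertex outside `{v₀, z}` to have out-degree exactly `1`. Such a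
vertex has an in-edge from `v₀`, so by the degree condition its in-degree is at least `2`.
Acyclicity gives a vertex outside `{v₀, z}` whose out-edge leaves that set; that edge either
enters `v₀` or is a second edge into `z`, and in both cases the in-degrees add up to at least
`2n - 2` — one more than the number of edges.
-/

open Finset

namespace Relation

variable {V : Type*}

theorem exists_forall_not_rel_of_acyclic [Finite V] {E : V → V → Prop}
    (hacyc : ∀ v, ¬ TransGen E v v) {S : Finset V} (hS : S.Nonempty) :
    ∃ v ∈ S, ∀ w ∈ S, ¬ E v w := by
  have : IsTrans V (fun a b => TransGen E b a) := ⟨fun _ _ _ h₁ h₂ => h₂.trans h₁⟩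
  have : Std.Irrefl (fun a b : V => TransGen E b a) := ⟨hacyc⟩
  obtain ⟨v, hv, hmin⟩ :=
    (Finite.wellFounded_of_trans_of_irrefl fun a b : V => TransGen E b a).has_min S hS
  exact ⟨v, hv, fun w hw hvw => hmin w hw (.single hvw)⟩

variable [Fintype V] (E : V → V → Prop) [DecidableRel E]

def outDeg (v : V) : ℕ := #{w | E v w}

def inDeg (v : V) : ℕ := #{w | E w v}

theorem sum_outDeg : ∑ v, outDeg E v = #{p : V × V | E p.1 p.2} := by
  rw [card_filter, Fintype.sum_prod_type]
  exact sum_congr rfl fun v _ => card_filter _ _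

theorem sum_inDeg : ∑ v, inDeg E v = #{p : V × V | E p.1 p.2} := by
  rw [card_filter, Fintype.sum_prod_type, sum_comm]
  exact sum_congr rfl fun v _ => card_filter _ _

variable {E}

theorem outDeg_eq_zero_iff {v : V} : outDeg E v = 0 ↔ ∀ w, ¬ E v w := by
  simp [outDeg, filter_eq_empty_iff]

theorem exists_rel_of_outDeg_pos {v : V} (h : 0 < outDeg E v) : ∃ w, E v w := by
  obtain ⟨w, hw⟩ := card_pos.1 h
  exact ⟨w, (mem_filter.1 hw).2⟩

theorem one_le_inDeg {u v : V} (h : E u v) : 1 ≤ inDeg E v :=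
  card_pos.2 ⟨u, mem_filter.2 ⟨mem_univ _, h⟩⟩

theorem two_le_inDeg {u u' v : V} (h : E u v) (h' : E u' v) (hne : u ≠ u') : 2 ≤ inDeg E v :=
  one_lt_card.2 ⟨u, by simpa using h, u', by simpa using h', hne⟩

theorem outDeg_le_card_sub_one {v : V} (hirr : ¬ E v v) : outDeg E v ≤ Fintype.card V - 1 := by
  have := card_lt_univ_of_notMem (s := {w | E v w}) (by simpa using hirr)
  unfold outDeg
  omega

theorem rel_of_outDeg_eq_card_sub_one {v : V} (hirr : ¬ E v v)
    (h : outDeg E v = Fintype.card V - 1) {w : V} (hw : w ≠ v) : E v w := by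
  classical
  have hsub : ({w | E v w} : Finset V) ⊆ ({v}ᶜ : Finset V) := fun w hw => by
    rw [mem_compl, mem_singleton]
    rintro rfl
    exact hirr (mem_filter.1 hw).2
  have heq := eq_of_subset_of_card_le hsub (by
    rw [card_compl, card_singleton]
    exact h.ge)
  have hw' : w ∈ ({w | E v w} : Finset V) := heq ▸ mem_compl.2 (by simpa using hw)
  simpa using hw'

theorem sum_eq_add_add_sum_compl_pair [DecidableEq V] (f : V → ℕ) {a b : V} (hab : a ≠ b) :
    ∑ v, f v = f a + f b + ∑ v ∈ ({a, b} : Finset V)ᶜ, f v := by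
  rw [← sum_add_sum_compl {a, b} f, sum_pair hab]

theorem card_compl_pair [DecidableEq V] {a b : V} (hab : a ≠ b) :
    #({a, b} : Finset V)ᶜ = Fintype.card V - 2 := by
  rw [card_compl, card_pair hab]

theorem exists_sink_of_sum_outDeg [DecidableEq V] (hacyc : ∀ v, ¬ TransGen E v v) {v₀ : V}
    (hout : ∀ v ≠ v₀, outDeg E v ≤ 1)
    (hsum : ∑ v, outDeg E v = 2 * Fintype.card V - 3) (h3 : 3 ≤ Fintype.card V) :
    ∃ z ≠ v₀, outDeg E z = 0 ∧ (∀ w ≠ v₀, E v₀ w) ∧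
      ∀ v ∈ ({v₀, z} : Finset V)ᶜ, outDeg E v = 1 := by
  have hirr : ∀ v, ¬ E v v := fun v h => hacyc v (.single h)
  obtain ⟨z, -, hz⟩ := exists_forall_not_rel_of_acyclic hacyc (univ_nonempty_iff.2 ⟨v₀⟩)
  have hz : outDeg E z = 0 := outDeg_eq_zero_iff.2 fun w => hz w (mem_univ w)
  have hzv₀ : z ≠ v₀ := by
    rintro rfl
    have hrest : ∑ v ∈ univ.erase z, outDeg E v ≤ #(univ.erase z) * 1 :=
      sum_le_card_nsmul _ _ 1 fun v hv => hout v (ne_of_mem_erase hv)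
    rw [← add_sum_erase _ _ (mem_univ z), hz] at hsum
    rw [card_erase_of_mem (mem_univ z), card_univ] at hrest
    omega
  have hO : ∑ v ∈ ({v₀, z} : Finset V)ᶜ, outDeg E v ≤ #({v₀, z} : Finset V)ᶜ * 1 :=
    sum_le_card_nsmul _ _ 1 fun v hv => hout v (by simp_all)
  have hv₀ := outDeg_le_card_sub_one (hirr v₀)
  rw [sum_eq_add_add_sum_compl_pair _ hzv₀.symm, hz] at hsum
  rw [card_compl_pair hzv₀.symm] at hO
  refine ⟨z, hzv₀, hz, fun w hw => rel_of_outDeg_eq_card_sub_one (hirr v₀) (by omega) hw, ?_⟩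
  have hsum_eq : ∑ v ∈ ({v₀, z} : Finset V)ᶜ, outDeg E v = ∑ _v ∈ ({v₀, z} : Finset V)ᶜ, 1 := by
    rw [sum_const, card_compl_pair hzv₀.symm, smul_eq_mul, mul_one]
    omega
  exact (sum_eq_sum_iff_of_le fun v hv => hout v (by simp_all)).1 hsum_eq

theorem two_mul_card_sub_two_le_sum_inDeg [DecidableEq V] (hacyc : ∀ v, ¬ TransGen E v v)
    (hno11 : ∀ v, ¬ (inDeg E v = 1 ∧ outDeg E v = 1)) {v₀ z : V} (hzv₀ : z ≠ v₀)
    (hz : outDeg E z = 0) (hv₀ : ∀ w ≠ v₀, E v₀ w)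
    (hO : ∀ v ∈ ({v₀, z} : Finset V)ᶜ, outDeg E v = 1) (h3 : 3 ≤ Fintype.card V) :
    2 * Fintype.card V - 2 ≤ ∑ v, inDeg E v := by
  set O : Finset V := ({v₀, z} : Finset V)ᶜ
  have hOcard : #O = Fintype.card V - 2 := card_compl_pair hzv₀.symm
  have hinO : ∀ v ∈ O, 2 ≤ inDeg E v := fun v hv => by
    have := one_le_inDeg (hv₀ v (by simp_all [O]))
    have := hno11 v
    have := hO v hv
    omega
  obtain ⟨v, hvO, hvw⟩ := exists_forall_not_rel_of_acyclic hacyc (S := O) (card_pos.1 (by omega))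
  obtain ⟨w, hw⟩ := exists_rel_of_outDeg_pos (E := E) (by rw [hO v hvO]; omega)
  have hvv₀ : v ≠ v₀ := by simp_all [O]
  have hpair : 2 ≤ inDeg E v₀ + inDeg E z := by
    have hwO : w = v₀ ∨ w = z := by
      by_contra hwO
      exact hvw w (by simpa [O] using hwO) hw
    rcases hwO with rfl | rfl
    · have := one_le_inDeg hw
      have := one_le_inDeg (hv₀ z hzv₀)
      omega
    · have := two_le_inDeg (hv₀ w hzv₀) hw hvv₀.symm
      omega
  calc 2 * Fintype.card V - 2 ≤ inDeg E v₀ + inDeg E z + ∑ _v ∈ O, 2 := by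
        rw [sum_const, hOcard, smul_eq_mul]
        omega
    _ ≤ inDeg E v₀ + inDeg E z + ∑ v ∈ O, inDeg E v := by gcongr with v hv; exact hinO v hv
    _ = ∑ v, inDeg E v := (sum_eq_add_add_sum_compl_pair _ hzv₀.symm).symm

end Relation

theorem two_vertex_graph_general {V : Type*} [Fintype V]
    (E : V → V → Prop) [DecidableRel E] (k : ℕ) (hk : 2 ≤ k)
    (hcard : Fintype.card V = k)
    (hedges : (Finset.univ.filter fun p : V × V => E p.1 p.2).card = 2 * k - 3)
    (hacyc : ∀ v : V, ¬ Relation.TransGen E v v)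
    (hout : ∃ v₀ : V, ∀ v : V, v ≠ v₀ →
      (Finset.univ.filter fun w => E v w).card ≤ 1)
    (hno11 : ∀ v : V, ¬ ((Finset.univ.filter fun w => E w v).card = 1 ∧
      (Finset.univ.filter fun w => E v w).card = 1)) :
    k = 2 := by
  classical
  by_contra hk2
  have h3 : 3 ≤ Fintype.card V := by omega
  obtain ⟨v₀, hv₀⟩ := hout
  obtain ⟨z, hzv₀, hz, hv₀z, hO⟩ :=
    Relation.exists_sink_of_sum_outDeg hacyc hv₀ (by rw [Relation.sum_outDeg, hedges, hcard]) h3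
  have hin := Relation.two_mul_card_sub_two_le_sum_inDeg hacyc hno11 hzv₀ hz hv₀z hO h3
  rw [Relation.sum_inDeg, hedges] at hin
  omega

/-- Let `Γ` be a finite connected directed acyclic graph with `k ≥ 2` vertices and
`2k - 3` edges, such that all vertices except possibly one have out-degree at most
one, and no vertex has exactly one incoming and exactly one outgoing edge.  Then
`k = 2`, i.e. `Γ` is the graph with two vertices joined by a single edge. -/
theorem two_vertex_graph {V : Type*} [Fintype V] [DecidableEq V]
    (E : V → V → Prop) [DecidableRel E] (k : ℕ) (hk : 2 ≤ k)
    (hcard : Fintype.card V = k)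
    (hedges : (Finset.univ.filter fun p : V × V => E p.1 p.2).card = 2 * k - 3)
    (hconn : ∀ u v : V, Relation.ReflTransGen (fun a b => E a b ∨ E b a) u v)
    (hacyc : ∀ v : V, ¬ Relation.TransGen E v v)
    (hout : ∃ v₀ : V, ∀ v : V, v ≠ v₀ →
      (Finset.univ.filter fun w => E v w).card ≤ 1)
    (hno11 : ∀ v : V, ¬ ((Finset.univ.filter fun w => E w v).card = 1 ∧
      (Finset.univ.filter fun w => E v w).card = 1)) :
    k = 2 :=
  two_vertex_graph_general E k hk hcard hedges hacyc hout hno11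
end

section
/- Let g be a Lie algebra over a field of characteristic zero. The symmetrization map Φ: S(g) → U(g), sending a monomial x₁⋯xₙ to (1/n!) ∑_{σ ∈ Sₙ} x_{σ(1)}⋯x_{σ(n)}, is a linear isomorphism (the Poincaré–Birkhoff–Witt isomorphism). -/
/-!
Fix a basis `(b i)` of `L` indexed by a linearly ordered set and identify `S(L)` with `K[X_i]`.
As in the classical proof (Jacobson; Humphreys §17.4), `L` acts on `K[X_i]` by a representation
`ρ` with `ρ (b i) X^d = X^(d + e_i)` whenever `i` is at most every variable of `X^d`, and
`ρ (b i) X^d ≡ X^(d + e_i)` modulo lower total degree in general; `ρ` is built degree by degree,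
and the Jacobi identity is what makes it a Lie algebra map. Letting `U(L)` act on `1` gives
`actOnOne : U(L) → K[X_i]`, which sends each ordered word `b_{i₁} ⋯ b_{iₙ}` to `X_{i₁} ⋯ X_{iₙ}`.

Transported to `K[X_i]`, `Φ` sends `X^d` to the symmetrization of the ordered word of `d`. A
symmetrized word differs from the word itself by shorter words: swapping two letters changes a
product by a commutator, i.e. by a shorter word, and dividing by `n!` is possible in
characteristic zero. Hence `actOnOne ∘ Φ` is the identity modulo lower degree, which makes `Φ`
injective, and induction on word length puts every word in the range of `Φ`.
-/

/-! The symmetric algebra of a module, constructed as a quotient of the tensor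
algebra by the commutativity relation, together with its canonical linear
embedding. -/

/-- The relation on the tensor algebra defining the symmetric algebra. -/
inductive SymRel (K : Type*) [Field K] (L : Type*) [AddCommGroup L] [Module K L] :
    TensorAlgebra K L → TensorAlgebra K L → Prop
  | comm (a b : L) : SymRel K L (TensorAlgebra.ι K a * TensorAlgebra.ι K b)
      (TensorAlgebra.ι K b * TensorAlgebra.ι K a)

/-- The symmetric algebra `S(L)` on the underlying vector space of `L`. -/
abbrev SymmAlgebra (K : Type*) [Field K] (L : Type*) [AddCommGroup L] [Module K L] :=
  RingQuot (SymRel K L)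

/-- The canonical linear embedding of `L` into its symmetric algebra. -/
noncomputable def ιS (K : Type*) [Field K] (L : Type*) [AddCommGroup L] [Module K L] :
    L →ₗ[K] SymmAlgebra K L :=
  (RingQuot.mkAlgHom K (SymRel K L)).toLinearMap ∘ₗ TensorAlgebra.ι K

/-- The symmetrization property characterizing the PBW isomorphism
`Φ : S(g) ≃ U(g)`: each monomial `x₁ ⋯ xₙ` is sent to
`(1/n!) ∑_{σ ∈ Sₙ} x_{σ(1)} ⋯ x_{σ(n)}`. -/
def IsSymmetrization (K : Type*) [Field K] (L : Type*) [LieRing L] [LieAlgebra K L]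
    (Φ : SymmAlgebra K L ≃ₗ[K] UniversalEnvelopingAlgebra K L) : Prop :=
  ∀ (n : ℕ) (x : Fin n → L),
    Φ ((List.ofFn fun i => ιS K L (x i)).prod) =
      (n.factorial : K)⁻¹ • ∑ σ : Equiv.Perm (Fin n),
        (List.ofFn fun i => UniversalEnvelopingAlgebra.ι K (x (σ i))).prod

namespace SymmAlgebra

variable (K : Type*) [Field K] (L : Type*) [AddCommGroup L] [Module K L]

theorem mul_comm' (x y : SymmAlgebra K L) : x * y = y * x := by
  let mk := RingQuot.mkAlgHom K (SymRel K L)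
  have hι (a : L) (u : TensorAlgebra K L) : Commute (mk (TensorAlgebra.ι K a)) (mk u) := by
    induction u using TensorAlgebra.induction with
    | algebraMap r => simpa using Algebra.commute_algebraMap_right r _
    | ι b =>
      simpa only [Commute, SemiconjBy, ← map_mul] using RingQuot.mkAlgHom_rel K (SymRel.comm a b)
    | mul u v hu hv => simpa using hu.mul_right hv
    | add u v hu hv => simpa using hu.add_right hv
  obtain ⟨a, rfl⟩ := RingQuot.mkAlgHom_surjective K (SymRel K L) x
  obtain ⟨b, rfl⟩ := RingQuot.mkAlgHom_surjective K (SymRel K L) y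
  induction a using TensorAlgebra.induction with
  | algebraMap r => simpa using (Algebra.commute_algebraMap_left r _).eq
  | ι a => exact hι a b
  | mul u v hu hv => simpa using ((Commute.mul_left hu hv : Commute (mk u * mk v) (mk b))).eq
  | add u v hu hv => simpa using ((Commute.add_left hu hv : Commute (mk u + mk v) (mk b))).eq

noncomputable instance : CommRing (SymmAlgebra K L) :=
  { (inferInstance : Ring (SymmAlgebra K L)) with mul_comm := mul_comm' K L }

variable {K L} {ι : Type*}

noncomputable def equivMvPolynomial (b : Module.Basis ι K L) :
    SymmAlgebra K L ≃ₐ[K] MvPolynomial ι K :=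
  AlgEquiv.ofAlgHom
    (RingQuot.liftAlgHom K ⟨TensorAlgebra.lift K (b.constr K MvPolynomial.X),
      by rintro _ _ ⟨x, y⟩; simp only [map_mul, mul_comm]⟩)
    (MvPolynomial.aeval fun i => ιS K L (b i))
    (MvPolynomial.algHom_ext fun i => by simp [ιS])
    (RingQuot.ringQuot_ext' _ _ _ <| TensorAlgebra.hom_ext <| b.ext fun i => by simp [ιS])

@[simp]
theorem equivMvPolynomial_ιS (b : Module.Basis ι K L) (i : ι) :
    equivMvPolynomial b (ιS K L (b i)) = MvPolynomial.X i := by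
  simp [equivMvPolynomial, ιS]

end SymmAlgebra

namespace MvPolynomial

variable {σ R : Type*} [CommSemiring R]

theorem restrictTotalDegree_eq_span (m : ℕ) :
    restrictTotalDegree σ R m =
      Submodule.span R ((fun d => monomial d (1 : R)) '' {d | d.degree ≤ m}) :=
  AddMonoidAlgebra.supported_eq_span_single R _

theorem monomial_mem_restrictTotalDegree {d : σ →₀ ℕ} {m : ℕ} (h : d.degree ≤ m) (c : R) :
    monomial d c ∈ restrictTotalDegree σ R m :=
  (mem_restrictTotalDegree σ m _).2 ((totalDegree_monomial_le d c).trans h)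

theorem restrictTotalDegree_mono {m m' : ℕ} (h : m ≤ m') :
    restrictTotalDegree σ R m ≤ restrictTotalDegree σ R m' := fun p hp =>
  (mem_restrictTotalDegree σ m' p).2 (((mem_restrictTotalDegree σ m p).1 hp).trans h)

theorem constr_basisMonomials_monomial {M : Type*} [AddCommMonoid M] [Module R M]
    (f : (σ →₀ ℕ) → M) (d : σ →₀ ℕ) :
    (basisMonomials σ R).constr R f (monomial d 1) = f d := by
  simpa using (basisMonomials σ R).constr_basis R f d

theorem prod_map_X [DecidableEq σ] (w : List σ) :
    (w.map (X : σ → MvPolynomial σ R)).prod = monomial (Multiset.toFinsupp w) 1 := by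
  induction w with
  | nil => simp
  | cons i w ih =>
    rw [List.map_cons, List.prod_cons, ih, X, monomial_mul, one_mul, ← Multiset.cons_coe,
      ← Multiset.singleton_add, Multiset.toFinsupp_add, Multiset.toFinsupp_singleton]

end MvPolynomial

namespace PBW

open MvPolynomial

attribute [local instance] LieRing.ofAssociativeRing

section Filtration

variable {R : Type*} [CommRing R] {M : Type*} [AddCommGroup M] [Module R M]
  {ι : Type*} {b : Module.Basis ι R M}

local notation "𝓕" => restrictTotalDegree ι R

theorem apply_eqOn_restrictTotalDegree {G H : M →ₗ[R] Module.End R (MvPolynomial ι R)} {m : ℕ}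
    (h : ∀ i d, d.degree ≤ m → G (b i) (monomial d 1) = H (b i) (monomial d 1)) (x : M)
    {p : MvPolynomial ι R} (hp : p ∈ 𝓕 m) : G x p = H x p := by
  rw [restrictTotalDegree_eq_span] at hp
  refine LinearMap.eqOn_span' (f := G x) (g := H x) ?_ hp
  rintro _ ⟨d, hd, rfl⟩
  exact LinearMap.congr_fun (b.ext (f₁ := G.flip (monomial d 1)) (f₂ := H.flip _)
    fun i => h i d hd) x

theorem apply_mem_restrictTotalDegree {G : M →ₗ[R] Module.End R (MvPolynomial ι R)} {m k : ℕ}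
    (h : ∀ i d, d.degree ≤ m → G (b i) (monomial d 1) ∈ 𝓕 k) (x : M)
    {p : MvPolynomial ι R} (hp : p ∈ 𝓕 m) : G x p ∈ 𝓕 k := by
  have hmono : ∀ d : ι →₀ ℕ, d.degree ≤ m → G x (monomial d 1) ∈ 𝓕 k := fun d hd => by
    have := (Submodule.map_span_le (G.flip (monomial d 1)) (Set.range b) (𝓕 k)).2
      (by rintro _ ⟨i, rfl⟩; exact h i d hd)
    rw [b.span_eq, Submodule.map_top] at this
    exact this ⟨x, rfl⟩
  rw [restrictTotalDegree_eq_span] at hp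
  exact (Submodule.map_span_le (G x) _ _).2 (by rintro _ ⟨d, hd, rfl⟩; exact hmono d hd)
    ⟨p, hp, rfl⟩

theorem apply_mem_restrictTotalDegree_succ {G : M →ₗ[R] Module.End R (MvPolynomial ι R)} {m : ℕ}
    (h : ∀ i d, d.degree ≤ m →
      G (b i) (monomial d 1) - monomial (d + Finsupp.single i 1) 1 ∈ 𝓕 d.degree)
    (x : M) {p : MvPolynomial ι R} (hp : p ∈ 𝓕 m) : G x p ∈ 𝓕 (m + 1) := by
  refine apply_mem_restrictTotalDegree (b := b) (fun i d hd => ?_) x hp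
  have hlead : monomial (d + Finsupp.single i 1) (1 : R) ∈ 𝓕 (m + 1) :=
    monomial_mem_restrictTotalDegree (by simp [hd]) 1
  simpa using add_mem (restrictTotalDegree_mono (by omega) (h i d hd)) hlead

theorem eq_zero_of_basis_monomial
    {B : M →ₗ[R] M →ₗ[R] Module.End R (MvPolynomial ι R)} {m : ℕ}
    (h : ∀ i k d, d.degree ≤ m → B (b i) (b k) (monomial d 1) = 0) (x y : M)
    {p : MvPolynomial ι R} (hp : p ∈ 𝓕 m) : B x y p = 0 := by
  have hx : ∀ k d, d.degree ≤ m → B x (b k) (monomial d 1) = 0 := fun k d hd =>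
    LinearMap.congr_fun (b.ext (f₁ := (B.flip (b k)).flip (monomial d 1)) (f₂ := 0)
      fun i => h i k d hd) x
  exact apply_eqOn_restrictTotalDegree (G := B x) (H := 0) hx y hp

end Filtration

section Exponents

variable {ι : Type*} [LinearOrder ι]

theorem forall_support_add_single_le_iff {d : ι →₀ ℕ} {i j : ι} :
    (∀ k ∈ (d + Finsupp.single i 1).support, j ≤ k) ↔ j ≤ i ∧ ∀ k ∈ d.support, j ≤ k := by
  classical
  simp [Finsupp.support_add_eq_union, or_imp, forall_and]

theorem support_nonempty_of_not_forall_le {d : ι →₀ ℕ} {i : ι}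
    (h : ¬ ∀ k ∈ d.support, i ≤ k) : d.support.Nonempty := by
  by_contra he
  simp [Finset.not_nonempty_iff_eq_empty.1 he] at h

theorem exists_eq_add_single_of_not_forall_le {d : ι →₀ ℕ} {i : ι}
    (h : ¬ ∀ k ∈ d.support, i ≤ k) :
    ∃ j d', d = d' + Finsupp.single j 1 ∧ (∀ k ∈ d'.support, j ≤ k) ∧ j < i := by
  set j := d.support.min' (support_nonempty_of_not_forall_le h)
  have hj : j ∈ d.support := Finset.min'_mem _ _
  refine ⟨j, d - Finsupp.single j 1, ?_, fun k hk => d.support.min'_le k ?_, ?_⟩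
  · rw [tsub_add_cancel_of_le]
    simpa [Finsupp.single_le_iff, Nat.one_le_iff_ne_zero] using hj
  · exact Finsupp.support_mono tsub_le_self hk
  · push Not at h
    obtain ⟨k, hk, hki⟩ := h
    exact (d.support.min'_le k hk).trans_lt hki

noncomputable def sortedWord (d : ι →₀ ℕ) : List ι := (Finsupp.toMultiset d).sort (· ≤ ·)

theorem sortedWord_pairwise (d : ι →₀ ℕ) : (sortedWord d).Pairwise (· ≤ ·) :=
  Multiset.pairwise_sort _ _

theorem toFinsupp_sortedWord (d : ι →₀ ℕ) : Multiset.toFinsupp (sortedWord d) = d := by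
  simp [sortedWord, Multiset.sort_eq]

theorem length_sortedWord (d : ι →₀ ℕ) : (sortedWord d).length = d.degree := by
  rw [sortedWord, Multiset.length_sort, Finsupp.card_toMultiset]
  rfl

theorem sortedWord_toFinsupp_ofFn {n : ℕ} (g : Fin n → ι) :
    sortedWord (Multiset.toFinsupp (List.ofFn g)) = List.ofFn (g ∘ Tuple.sort g) := by
  refine List.Perm.eq_of_pairwise (fun _ _ _ _ => le_antisymm) (sortedWord_pairwise _)
    (List.sortedLE_ofFn_iff.2 (Tuple.monotone_sort g)).pairwise ?_
  rw [← Multiset.coe_eq_coe, sortedWord, Multiset.sort_eq, Multiset.toFinsupp_toMultiset,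
    Multiset.coe_eq_coe]
  exact ((Tuple.sort g).ofFn_comp_perm g).symm

end Exponents

section Enveloping

variable {K : Type*} [Field K] {L : Type*} [LieRing L] [LieAlgebra K L]

local notation "U" => UniversalEnvelopingAlgebra K L
local notation "ιU" => UniversalEnvelopingAlgebra.ι K

noncomputable def wordProd (w : List L) : U := (w.map (ιU ·)).prod

@[simp]
theorem wordProd_nil : wordProd (K := K) ([] : List L) = 1 := rfl

@[simp]
theorem wordProd_cons (x : L) (w : List L) :
    wordProd (K := K) (x :: w) = ιU x * wordProd w := List.prod_cons

theorem wordProd_append (w w' : List L) :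
    wordProd (K := K) (w ++ w') = wordProd w * wordProd w' := by
  simp [wordProd]

theorem wordProd_ofFn {n : ℕ} (x : Fin n → L) :
    wordProd (K := K) (List.ofFn x) = (List.ofFn fun i => ιU (x i)).prod := by
  rw [wordProd, List.map_ofFn]
  rfl

noncomputable def symmetrize (n : ℕ) : MultilinearMap K (fun _ : Fin n => L) U :=
  (n.factorial : K)⁻¹ • ∑ σ : Equiv.Perm (Fin n),
    ((MultilinearMap.mkPiAlgebraFin K n U).compLinearMap
      fun _ => (ιU : L →ₗ⁅K⁆ U).toLinearMap).domDomCongr σ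

theorem symmetrize_apply {n : ℕ} (x : Fin n → L) :
    symmetrize (K := K) n x =
      (n.factorial : K)⁻¹ • ∑ σ : Equiv.Perm (Fin n), wordProd (List.ofFn (x ∘ σ)) := by
  simp [symmetrize, wordProd_ofFn, Function.comp_def]

theorem symmetrize_comp_perm {n : ℕ} (x : Fin n → L) (σ : Equiv.Perm (Fin n)) :
    symmetrize (K := K) n (x ∘ σ) = symmetrize n x := by
  rw [symmetrize_apply, symmetrize_apply]
  exact congrArg _
    (Equiv.sum_comp (Equiv.mulLeft σ) fun τ => wordProd (K := K) (List.ofFn (x ∘ τ)))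

theorem symmetrize_comp_cast {m n : ℕ} (h : m = n) (x : Fin n → L) :
    symmetrize (K := K) m (x ∘ Fin.cast h) = symmetrize n x := by
  subst h
  rfl

theorem symmetrize_zero (x : Fin 0 → L) : symmetrize (K := K) 0 x = 1 := by
  simp [symmetrize_apply]

noncomputable def wordFiltration (m : ℕ) : Submodule K U :=
  Submodule.span K (wordProd '' {w : List L | w.length ≤ m})

theorem wordProd_mem_wordFiltration {w : List L} {m : ℕ} (h : w.length ≤ m) :
    wordProd w ∈ wordFiltration (K := K) m :=
  Submodule.subset_span ⟨w, h, rfl⟩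

theorem ι_mem_wordFiltration_one (x : L) : ιU x ∈ wordFiltration (K := K) 1 := by
  simpa [wordProd] using wordProd_mem_wordFiltration (K := K) (w := [x]) le_rfl

theorem wordFiltration_mono {m m' : ℕ} (h : m ≤ m') :
    wordFiltration (K := K) (L := L) m ≤ wordFiltration m' :=
  Submodule.span_mono (Set.image_mono fun _ hw => le_trans hw h)

theorem mul_mem_wordFiltration {m m' : ℕ} {u v : U} (hu : u ∈ wordFiltration m)
    (hv : v ∈ wordFiltration m') : u * v ∈ wordFiltration (m + m') := by
  have huv := Submodule.mul_mem_mul hu hv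
  rw [wordFiltration, wordFiltration, Submodule.span_mul_span] at huv
  refine Submodule.span_le.2 ?_ huv
  rintro _ ⟨_, ⟨w, hw, rfl⟩, _, ⟨w', hw', rfl⟩, rfl⟩
  simp only [← wordProd_append]
  exact wordProd_mem_wordFiltration (by simpa using Nat.add_le_add hw hw')

theorem exists_mem_wordFiltration (u : U) : ∃ m, u ∈ wordFiltration (K := K) m := by
  obtain ⟨a, rfl⟩ : ∃ a, UniversalEnvelopingAlgebra.mkAlgHom K L a = u :=
    RingCon.mkₐ_surjective _ u
  induction a using TensorAlgebra.induction with
  | algebraMap r =>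
    refine ⟨0, ?_⟩
    rw [AlgHom.commutes, Algebra.algebraMap_eq_smul_one]
    exact Submodule.smul_mem _ _ (wordProd_mem_wordFiltration (w := []) le_rfl)
  | ι x => exact ⟨1, ι_mem_wordFiltration_one x⟩
  | mul a c ha hc =>
    obtain ⟨m, hm⟩ := ha
    obtain ⟨m', hm'⟩ := hc
    exact ⟨m + m', by rw [map_mul]; exact mul_mem_wordFiltration hm hm'⟩
  | add a c ha hc =>
    obtain ⟨m, hm⟩ := ha
    obtain ⟨m', hm'⟩ := hc
    rw [map_add]
    exact ⟨max m m', add_mem (wordFiltration_mono (le_max_left _ _) hm)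
      (wordFiltration_mono (le_max_right _ _) hm')⟩

theorem ι_lie (x y : L) : ιU ⁅x, y⁆ = ιU x * ιU y - ιU y * ιU x := by
  rw [LieHom.map_lie, Ring.lie_def]

theorem wordProd_sub_wordProd_mem_of_perm {l l' : List L} (h : l.Perm l') :
    wordProd l - wordProd l' ∈ wordFiltration (K := K) (l.length - 1) := by
  induction h with
  | nil => simp
  | @cons x l₁ l₂ h ih =>
    by_cases hne : l₁ = []
    · subst hne
      simp [List.perm_nil.1 h.symm]
    rw [wordProd_cons, wordProd_cons, ← mul_sub]
    refine wordFiltration_mono ?_ (mul_mem_wordFiltration (ι_mem_wordFiltration_one x) ih)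
    have := List.length_pos_iff.2 hne
    simp only [List.length_cons]
    omega
  | swap x y t =>
    rw [wordProd_cons, wordProd_cons, wordProd_cons, wordProd_cons, ← mul_assoc, ← mul_assoc,
      ← sub_mul, ← ι_lie, ← wordProd_cons]
    exact wordProd_mem_wordFiltration (by simp)
  | @trans l₁ l₂ l₃ h₁₂ _ ih₁₂ ih₂₃ =>
    rw [← sub_add_sub_cancel _ (wordProd l₂)]
    exact add_mem ih₁₂ (h₁₂.length_eq ▸ ih₂₃)

theorem symmetrize_sub_wordProd_mem [CharZero K] {n : ℕ} (x : Fin n → L) :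
    symmetrize (K := K) n x - wordProd (List.ofFn x) ∈ wordFiltration (n - 1) := by
  have hsum : symmetrize (K := K) n x - wordProd (List.ofFn x) = (n.factorial : K)⁻¹ •
      ∑ σ : Equiv.Perm (Fin n), (wordProd (List.ofFn (x ∘ σ)) - wordProd (List.ofFn x)) := by
    rw [symmetrize_apply, Finset.sum_sub_distrib, smul_sub, Finset.sum_const, Finset.card_univ,
      Fintype.card_perm, Fintype.card_fin, ← Nat.cast_smul_eq_nsmul K, smul_smul,
      inv_mul_cancel₀ (Nat.cast_ne_zero.2 n.factorial_ne_zero), one_smul]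
  rw [hsum]
  refine Submodule.smul_mem _ _ (Submodule.sum_mem _ fun σ _ => ?_)
  simpa using wordProd_sub_wordProd_mem_of_perm (σ.ofFn_comp_perm x)

end Enveloping

variable {K : Type*} [Field K] {L : Type*} [LieRing L] [LieAlgebra K L]
  {ι : Type*} [LinearOrder ι] (b : Module.Basis ι K L)

local notation "P" => MvPolynomial ι K
local notation "𝓕" => restrictTotalDegree ι K

/-- If `j < i` is the least variable of `X^d = X_j X^d'`, the relation
`ρ_i ρ_j = ρ_j ρ_i + ρ_[b_i, b_j]` dictates `ρ_i X^d = ρ_j (ρ_i X^d') + ρ_[b_i, b_j] X^d'`.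
Splitting `ρ_i X^d' = X^(d' + e_i) + r` and using `ρ_j X^(d' + e_i) = X^(d + e_i)`, the previous
approximation `ρ` is only evaluated in degree `< |d|`, where it is already correct. -/
noncomputable def stepValue (ρ : L →ₗ[K] Module.End K P) (i : ι) (d : ι →₀ ℕ) : P :=
  if h : ∀ k ∈ d.support, i ≤ k then monomial (d + Finsupp.single i 1) 1
  else
    let j := d.support.min' (support_nonempty_of_not_forall_le h)
    let d' := d - Finsupp.single j 1
    monomial (d + Finsupp.single i 1) 1 +
      ρ (b j) (ρ (b i) (monomial d' 1) - monomial (d' + Finsupp.single i 1) 1) +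
      ρ ⁅b i, b j⁆ (monomial d' 1)

theorem stepValue_of_forall_le (ρ : L →ₗ[K] Module.End K P) {i : ι} {d : ι →₀ ℕ}
    (h : ∀ k ∈ d.support, i ≤ k) :
    stepValue b ρ i d = monomial (d + Finsupp.single i 1) 1 := by
  rw [stepValue, dif_pos h]

theorem stepValue_add_single (ρ : L →ₗ[K] Module.End K P) {i j : ι} {d : ι →₀ ℕ}
    (hj : ∀ k ∈ d.support, j ≤ k) (hji : j < i) :
    stepValue b ρ i (d + Finsupp.single j 1) =
      monomial (d + Finsupp.single j 1 + Finsupp.single i 1) 1 +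
        ρ (b j) (ρ (b i) (monomial d 1) - monomial (d + Finsupp.single i 1) 1) +
        ρ ⁅b i, b j⁆ (monomial d 1) := by
  have hjmem : j ∈ (d + Finsupp.single j 1).support := by simp
  have hmin : (d + Finsupp.single j 1).support.min' ⟨j, hjmem⟩ = j :=
    le_antisymm (Finset.min'_le _ _ hjmem)
      (Finset.le_min' _ _ _ fun k hk => (forall_support_add_single_le_iff.2 ⟨le_rfl, hj⟩) k hk)
  have hnot : ¬ ∀ k ∈ (d + Finsupp.single j 1).support, i ≤ k :=
    fun h => hji.not_ge (h j hjmem)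
  rw [stepValue, dif_neg hnot]
  simp only [hmin, add_tsub_cancel_right]

noncomputable def step (ρ : L →ₗ[K] Module.End K P) : L →ₗ[K] Module.End K P :=
  b.constr K fun i => (basisMonomials ι K).constr K (stepValue b ρ i)

theorem step_apply_basis_monomial (ρ : L →ₗ[K] Module.End K P) (i : ι) (d : ι →₀ ℕ) :
    step b ρ (b i) (monomial d 1) = stepValue b ρ i d := by
  rw [step, Module.Basis.constr_basis, constr_basisMonomials_monomial]

noncomputable def approx (n : ℕ) : L →ₗ[K] Module.End K P := (step b)^[n] 0

theorem approx_succ (n : ℕ) : approx b (n + 1) = step b (approx b n) :=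
  Function.iterate_succ_apply' _ _ _

theorem approx_succ_of_forall_le (n : ℕ) {i : ι} {d : ι →₀ ℕ} (h : ∀ k ∈ d.support, i ≤ k) :
    approx b (n + 1) (b i) (monomial d 1) = monomial (d + Finsupp.single i 1) 1 := by
  rw [approx_succ, step_apply_basis_monomial, stepValue_of_forall_le b _ h]

theorem approx_succ_add_single (n : ℕ) {i j : ι} {d : ι →₀ ℕ}
    (hj : ∀ k ∈ d.support, j ≤ k) (hji : j < i) :
    approx b (n + 1) (b i) (monomial (d + Finsupp.single j 1) 1) =
      monomial (d + Finsupp.single j 1 + Finsupp.single i 1) 1 +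
        approx b n (b j) (approx b n (b i) (monomial d 1) - monomial (d + Finsupp.single i 1) 1) +
        approx b n ⁅b i, b j⁆ (monomial d 1) := by
  rw [approx_succ, step_apply_basis_monomial, stepValue_add_single b _ hj hji]

theorem approx_succ_eq_and_sub_mem (n : ℕ) : ∀ i d, d.degree < n →
    approx b (n + 1) (b i) (monomial d 1) = approx b n (b i) (monomial d 1) ∧
      approx b n (b i) (monomial d 1) - monomial (d + Finsupp.single i 1) 1 ∈ 𝓕 d.degree := by
  induction n with
  | zero => intro i d hd; omega
  | succ n ih =>
    intro i d hd
    by_cases h : ∀ k ∈ d.support, i ≤ k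
    · rw [approx_succ_of_forall_le b _ h, approx_succ_of_forall_le b _ h, sub_self]
      exact ⟨rfl, zero_mem _⟩
    obtain ⟨j, d, rfl, hj, hji⟩ := exists_eq_add_single_of_not_forall_le h
    have hdeg : d.degree < n := by simp at hd; omega
    have hstable {x : L} {p : P} (hp : p ∈ 𝓕 d.degree) : approx b (n + 1) x p = approx b n x p :=
      apply_eqOn_restrictTotalDegree (fun i' d' hd' => (ih i' d' (by omega)).1) x hp
    have hsucc {x : L} {p : P} (hp : p ∈ 𝓕 d.degree) : approx b n x p ∈ 𝓕 (d.degree + 1) :=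
      apply_mem_restrictTotalDegree_succ (fun i' d' hd' => (ih i' d' (by omega)).2) x hp
    have hd : monomial d (1 : K) ∈ 𝓕 d.degree := monomial_mem_restrictTotalDegree le_rfl 1
    have hr := (ih i d hdeg).2
    rw [approx_succ_add_single b _ hj hji, approx_succ_add_single b _ hj hji, (ih i d hdeg).1,
      hstable hr, hstable hd, add_assoc, add_sub_cancel_left]
    exact ⟨rfl, by simpa using add_mem (hsucc hr) (hsucc hd)⟩

noncomputable def rep : L →ₗ[K] Module.End K P :=
  b.constr K fun i => (basisMonomials ι K).constr K fun d =>
    approx b (d.degree + 1) (b i) (monomial d 1)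

theorem rep_basis_monomial {n : ℕ} (i : ι) {d : ι →₀ ℕ} (hd : d.degree < n) :
    rep b (b i) (monomial d 1) = approx b n (b i) (monomial d 1) := by
  rw [rep, Module.Basis.constr_basis, constr_basisMonomials_monomial]
  induction n, hd using Nat.le_induction with
  | base => rfl
  | succ n hn ih => rw [ih, (approx_succ_eq_and_sub_mem b n i d hn).1]

theorem rep_sub_monomial_mem (i : ι) (d : ι →₀ ℕ) :
    rep b (b i) (monomial d 1) - monomial (d + Finsupp.single i 1) 1 ∈ 𝓕 d.degree := by
  rw [rep_basis_monomial b i (Nat.lt_succ_self _)]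
  exact (approx_succ_eq_and_sub_mem b _ i d (Nat.lt_succ_self _)).2

theorem rep_mem_restrictTotalDegree (x : L) {m : ℕ} {p : P} (hp : p ∈ 𝓕 m) :
    rep b x p ∈ 𝓕 (m + 1) :=
  apply_mem_restrictTotalDegree_succ (fun i d _ => rep_sub_monomial_mem b i d) x hp

theorem rep_of_forall_le {i : ι} {d : ι →₀ ℕ} (h : ∀ k ∈ d.support, i ≤ k) :
    rep b (b i) (monomial d 1) = monomial (d + Finsupp.single i 1) 1 := by
  rw [rep_basis_monomial b i (Nat.lt_succ_self _), approx_succ_of_forall_le b _ h]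

theorem rep_add_single {i j : ι} {d : ι →₀ ℕ} (hj : ∀ k ∈ d.support, j ≤ k) (hji : j < i) :
    rep b (b i) (monomial (d + Finsupp.single j 1) 1) =
      rep b (b j) (rep b (b i) (monomial d 1)) + rep b ⁅b i, b j⁆ (monomial d 1) := by
  have hrep {x : L} {p : P} (hp : p ∈ 𝓕 d.degree) : rep b x p = approx b (d.degree + 1) x p :=
    apply_eqOn_restrictTotalDegree (fun i' d' hd' => rep_basis_monomial b i' (by omega)) x hp
  have hlead : rep b (b j) (monomial (d + Finsupp.single i 1) 1) =
      monomial (d + Finsupp.single j 1 + Finsupp.single i 1) 1 := by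
    rw [rep_of_forall_le b (forall_support_add_single_le_iff.2 ⟨hji.le, hj⟩), add_right_comm]
  have hr := rep_sub_monomial_mem b i d
  rw [rep_basis_monomial b i (by simp : _ < d.degree + 1 + 1), approx_succ_add_single b _ hj hji,
    ← rep_basis_monomial b i (Nat.lt_succ_self _), ← hrep hr,
    ← hrep (monomial_mem_restrictTotalDegree le_rfl 1), map_sub, hlead]
  abel

noncomputable def bracketDefect : L →ₗ[K] L →ₗ[K] Module.End K P :=
  LinearMap.mk₂ K (fun x y => rep b x * rep b y - rep b y * rep b x - rep b ⁅x, y⁆)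
    (fun x x' y => by simp only [map_add, add_lie, add_mul, mul_add]; abel)
    (fun c x y => by simp only [map_smul, smul_lie, smul_mul_assoc, mul_smul_comm, smul_sub])
    (fun x y y' => by simp only [map_add, lie_add, add_mul, mul_add]; abel)
    (fun c x y => by simp only [map_smul, lie_smul, smul_mul_assoc, mul_smul_comm, smul_sub])

theorem bracketDefect_apply (x y : L) (p : P) :
    bracketDefect b x y p = rep b x (rep b y p) - rep b y (rep b x p) - rep b ⁅x, y⁆ p := by
  rfl

theorem bracketDefect_swap (x y : L) : bracketDefect b y x = -bracketDefect b x y := by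
  simp only [bracketDefect, LinearMap.mk₂_apply]
  rw [← lie_skew x, map_neg]
  abel

theorem bracketDefect_basis_of_lt {i k : ι} {d : ι →₀ ℕ} (hk : ∀ l ∈ d.support, k ≤ l)
    (hki : k < i) : bracketDefect b (b i) (b k) (monomial d 1) = 0 := by
  rw [bracketDefect_apply, rep_of_forall_le b hk, rep_add_single b hk hki]
  abel

theorem bracketDefect_basis_of_min_le {i k : ι} {d : ι →₀ ℕ}
    (h : ∀ l ∈ d.support, min i k ≤ l) : bracketDefect b (b i) (b k) (monomial d 1) = 0 := by
  rcases lt_trichotomy i k with hik | rfl | hki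
  · rw [bracketDefect_swap, LinearMap.neg_apply,
      bracketDefect_basis_of_lt b (fun l hl => min_eq_left hik.le ▸ h l hl) hik, neg_zero]
  · simp [bracketDefect]
  · exact bracketDefect_basis_of_lt b (fun l hl => min_eq_right hki.le ▸ h l hl) hki

section

variable {b} {d : ι →₀ ℕ} {j : ι}

theorem rep_rep_add_single {i k : ι}
    (ih : ∀ (x y : L) (p : P), p ∈ 𝓕 d.degree → bracketDefect b x y p = 0)
    (hj : ∀ l ∈ d.support, j ≤ l) (hji : j < i) (hjk : j < k) :
    rep b (b i) (rep b (b k) (monomial (d + Finsupp.single j 1) 1)) =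
      rep b (b j) (rep b (b i) (rep b (b k) (monomial d 1))) +
        rep b ⁅b i, b j⁆ (rep b (b k) (monomial d 1)) +
        rep b (b i) (rep b ⁅b k, b j⁆ (monomial d 1)) := by
  have hlead : bracketDefect b (b i) (b j) (monomial (d + Finsupp.single k 1) 1) = 0 :=
    bracketDefect_basis_of_lt b (forall_support_add_single_le_iff.2 ⟨hjk.le, hj⟩) hji
  have hrest := ih (b i) (b j) _ (rep_sub_monomial_mem b k d)
  rw [map_sub, hlead, sub_zero, bracketDefect_apply] at hrest
  rw [rep_add_single b hj hjk, map_add]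
  linear_combination hrest

theorem bracketDefect_basis_add_single {i k : ι}
    (ih : ∀ (x y : L) (p : P), p ∈ 𝓕 d.degree → bracketDefect b x y p = 0)
    (hj : ∀ l ∈ d.support, j ≤ l) (hji : j < i) (hjk : j < k) :
    bracketDefect b (b i) (b k) (monomial (d + Finsupp.single j 1) 1) = 0 := by
  -- Expanding `ρ_i ρ_k ρ_j X^d` and `ρ_k ρ_i ρ_j X^d` by `rep_rep_add_single`, the defect
  -- becomes, modulo the induction hypothesis in degree `|d|`, `ρ` of a Jacobi sum.
  have hd : monomial d (1 : K) ∈ 𝓕 d.degree := monomial_mem_restrictTotalDegree le_rfl 1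
  have h₁ := congrArg (rep b (b j)) (ih (b i) (b k) _ hd)
  have h₂ := ih (b k) ⁅b i, b j⁆ _ hd
  have h₃ := ih (b i) ⁅b k, b j⁆ _ hd
  have h₄ := ih (b j) ⁅b i, b k⁆ _ hd
  simp only [bracketDefect_apply, map_sub, map_zero] at h₁ h₂ h₃ h₄
  have hjacobi : ⁅b i, ⁅b k, b j⁆⁆ + ⁅b j, ⁅b i, b k⁆⁆ - ⁅b k, ⁅b i, b j⁆⁆ = 0 := by
    rw [← lie_skew (b k) (b j), ← lie_skew (b i) (b k), lie_neg, lie_neg, ← neg_eq_zero,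
      ← lie_jacobi (b i) (b j) (b k)]
    abel
  replace hjacobi := congrArg (rep b · (monomial d 1)) hjacobi
  simp only [map_add, map_sub, map_zero, LinearMap.add_apply, LinearMap.sub_apply,
    LinearMap.zero_apply] at hjacobi
  have hz : monomial (d + Finsupp.single j 1) (1 : K) = rep b (b j) (monomial d 1) := by
    rw [rep_of_forall_le b hj]
  rw [bracketDefect_apply, rep_rep_add_single ih hj hji hjk, rep_rep_add_single ih hj hjk hji, hz]
  linear_combination h₁ - h₂ + h₃ + h₄ + hjacobi

end

theorem bracketDefect_eq_zero (x y : L) (p : P) : bracketDefect b x y p = 0 := by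
  suffices ∀ n, ∀ (x y : L) (p : P), p ∈ 𝓕 n → bracketDefect b x y p = 0 from
    this _ x y p ((mem_restrictTotalDegree _ _ _).2 le_rfl)
  intro n
  induction n using Nat.strong_induction_on with
  | _ n ih =>
  refine eq_zero_of_basis_monomial (b := b) (fun i k d hd => ?_)
  by_cases h : ∀ l ∈ d.support, min i k ≤ l
  · exact bracketDefect_basis_of_min_le b h
  obtain ⟨j, d, rfl, hj, hjik⟩ := exists_eq_add_single_of_not_forall_le h
  exact bracketDefect_basis_add_single (ih d.degree (by simp at hd; omega)) hj
    (lt_min_iff.1 hjik).1 (lt_min_iff.1 hjik).2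

noncomputable def repLie : L →ₗ⁅K⁆ Module.End K P :=
  { rep b with
    map_lie' := fun {x y} => LinearMap.ext fun p => by
      rw [Ring.lie_def, eq_comm, ← sub_eq_zero]
      exact bracketDefect_eq_zero b x y p }

theorem repLie_apply (x : L) : repLie b x = rep b x := rfl

local notation "U" => UniversalEnvelopingAlgebra K L
local notation "ιU" => UniversalEnvelopingAlgebra.ι K

noncomputable def actOnOne : U →ₗ[K] P :=
  (LinearMap.applyₗ (1 : P)).comp (UniversalEnvelopingAlgebra.lift K (repLie b)).toLinearMap

@[simp]
theorem actOnOne_one : actOnOne b 1 = 1 := by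
  simp [actOnOne]

theorem actOnOne_ι_mul (x : L) (u : U) : actOnOne b (ιU x * u) = rep b x (actOnOne b u) := by
  simp [actOnOne, repLie_apply]

theorem actOnOne_wordProd_mem (w : List L) : actOnOne b (wordProd w) ∈ 𝓕 w.length := by
  induction w with
  | nil => simpa using monomial_mem_restrictTotalDegree (σ := ι) (d := 0) (by simp) (1 : K)
  | cons x w ih =>
    rw [wordProd_cons, actOnOne_ι_mul]
    exact rep_mem_restrictTotalDegree b x ih

theorem actOnOne_mem_of_mem_wordFiltration {m : ℕ} {u : U} (hu : u ∈ wordFiltration m) :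
    actOnOne b u ∈ 𝓕 m :=
  (Submodule.map_span_le _ _ _).2
    (by rintro _ ⟨w, hw, rfl⟩; exact restrictTotalDegree_mono hw (actOnOne_wordProd_mem b w))
    ⟨u, hu, rfl⟩

theorem actOnOne_wordProd_of_sorted {w : List ι} (hw : w.Pairwise (· ≤ ·)) :
    actOnOne b (wordProd (w.map b)) = monomial (Multiset.toFinsupp w) 1 := by
  induction w with
  | nil => simp
  | cons i w ih =>
    obtain ⟨hi, hw⟩ := List.pairwise_cons.1 hw
    rw [List.map_cons, wordProd_cons, actOnOne_ι_mul, ih hw, rep_of_forall_le b (by simpa using hi),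
      ← Multiset.cons_coe, ← Multiset.singleton_add, Multiset.toFinsupp_add,
      Multiset.toFinsupp_singleton, add_comm]

noncomputable def symmetrization : P →ₗ[K] U :=
  (basisMonomials ι K).constr K fun d => symmetrize _ (b ∘ (sortedWord d).get)

theorem symmetrization_monomial (d : ι →₀ ℕ) :
    symmetrization b (monomial d 1) = symmetrize _ (b ∘ (sortedWord d).get) :=
  constr_basisMonomials_monomial _ d

theorem symmetrization_monomial_toFinsupp_ofFn {n : ℕ} (g : Fin n → ι) :
    symmetrization b (monomial (Multiset.toFinsupp (List.ofFn g)) 1) =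
      symmetrize n (b ∘ g) := by
  rw [symmetrization_monomial, ← symmetrize_comp_perm (b ∘ g) (Tuple.sort g)]
  generalize hw : sortedWord (Multiset.toFinsupp (List.ofFn g : Multiset ι)) = w
  rw [sortedWord_toFinsupp_ofFn] at hw
  subst hw
  rw [← symmetrize_comp_cast (List.length_ofFn (f := g ∘ Tuple.sort g))]
  congr 1
  funext i
  simp [Fin.cast]

theorem symmetrization_one : symmetrization b 1 = 1 := by
  simpa [symmetrize_zero] using symmetrization_monomial_toFinsupp_ofFn b Fin.elim0

theorem symmetrize_mem_range {n : ℕ} (x : Fin n → L) :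
    symmetrize n x ∈ LinearMap.range (symmetrization b) := by
  have h : (LinearMap.range (symmetrization b)).mkQ.compMultilinearMap (symmetrize n) = 0 :=
    Module.Basis.ext_multilinear (fun _ => b) fun g => by
      simp only [LinearMap.compMultilinearMap_apply, zero_apply,
        Submodule.mkQ_apply, Submodule.Quotient.mk_eq_zero]
      exact ⟨_, symmetrization_monomial_toFinsupp_ofFn b g⟩
  exact (Submodule.Quotient.mk_eq_zero _).1 (MultilinearMap.congr_fun h x)

theorem wordFiltration_le_range [CharZero K] (m : ℕ) :
    wordFiltration m ≤ LinearMap.range (symmetrization b) := by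
  induction m with
  | zero =>
    refine Submodule.span_le.2 ?_
    rintro _ ⟨w, hw, rfl⟩
    rw [List.eq_nil_of_length_eq_zero (Nat.le_zero.1 hw), wordProd_nil,
      ← symmetrization_one b]
    exact LinearMap.mem_range_self _ _
  | succ m ih =>
    refine Submodule.span_le.2 ?_
    rintro _ ⟨w, hw, rfl⟩
    have hdiff := symmetrize_sub_wordProd_mem (K := K) w.get
    rw [List.ofFn_get] at hdiff
    rw [← sub_sub_cancel (symmetrize _ w.get) (wordProd w)]
    exact sub_mem (symmetrize_mem_range b _)
      (ih (wordFiltration_mono (Nat.sub_le_of_le_add hw) hdiff))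

theorem symmetrization_surjective [CharZero K] : Function.Surjective (symmetrization b) :=
  fun u => (exists_mem_wordFiltration u).elim fun m hm => wordFiltration_le_range b m hm

theorem actOnOne_symmetrization_monomial_sub_mem [CharZero K] (d : ι →₀ ℕ) :
    actOnOne b (symmetrization b (monomial d 1)) - monomial d 1 ∈ 𝓕 (d.degree - 1) := by
  set w := sortedWord d
  have hlead : actOnOne b (wordProd (List.ofFn (b ∘ w.get))) = monomial d 1 := by
    rw [← List.map_ofFn, List.ofFn_get, actOnOne_wordProd_of_sorted b (sortedWord_pairwise d),
      toFinsupp_sortedWord]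
  have hdiff := actOnOne_mem_of_mem_wordFiltration b (symmetrize_sub_wordProd_mem (b ∘ w.get))
  rw [map_sub, hlead] at hdiff
  rwa [symmetrization_monomial, ← length_sortedWord d]

theorem actOnOne_symmetrization_sub_mem [CharZero K] {m : ℕ} {p : P} (hp : p ∈ 𝓕 (m + 1)) :
    actOnOne b (symmetrization b p) - p ∈ 𝓕 m := by
  rw [restrictTotalDegree_eq_span] at hp
  refine (Submodule.map_span_le (actOnOne b ∘ₗ symmetrization b - LinearMap.id) _ _).2 ?_
    ⟨p, hp, rfl⟩
  rintro _ ⟨d, hd, rfl⟩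
  exact restrictTotalDegree_mono (Nat.sub_le_of_le_add hd)
    (actOnOne_symmetrization_monomial_sub_mem b d)

theorem actOnOne_symmetrization_of_mem_zero {p : P} (hp : p ∈ 𝓕 0) :
    actOnOne b (symmetrization b p) = p := by
  rw [restrictTotalDegree_eq_span] at hp
  refine LinearMap.eqOn_span' (f := actOnOne b ∘ₗ symmetrization b) (g := LinearMap.id) ?_ hp
  rintro _ ⟨d, hd, rfl⟩
  obtain rfl : d = 0 := (Finsupp.degree_eq_zero_iff d).1 (Nat.le_zero.1 hd)
  simp [symmetrization_one]

theorem symmetrization_injective [CharZero K] : Function.Injective (symmetrization b) := by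
  suffices ∀ m (p : P), p ∈ 𝓕 m → symmetrization b p = 0 → p = 0 from
    (injective_iff_map_eq_zero _).2 fun p => this _ p ((mem_restrictTotalDegree _ _ _).2 le_rfl)
  intro m
  induction m with
  | zero => intro p hp h0; rw [← actOnOne_symmetrization_of_mem_zero b hp, h0, map_zero]
  | succ m ih =>
    intro p hp h0
    exact ih p (by simpa [h0] using neg_mem (actOnOne_symmetrization_sub_mem b hp)) h0

theorem symmetrization_equivMvPolynomial_prod {n : ℕ} (x : Fin n → L) :
    symmetrization b (SymmAlgebra.equivMvPolynomial b (List.ofFn fun i => ιS K L (x i)).prod) =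
      symmetrize n x := by
  let F := (symmetrization b ∘ₗ (SymmAlgebra.equivMvPolynomial b).toLinearMap).compMultilinearMap
    ((MultilinearMap.mkPiAlgebraFin K n (SymmAlgebra K L)).compLinearMap fun _ => ιS K L)
  have hF : F = symmetrize n := Module.Basis.ext_multilinear (fun _ => b) fun g => by
    simp only [F, LinearMap.compMultilinearMap_apply, MultilinearMap.compLinearMap_apply,
      MultilinearMap.mkPiAlgebraFin_apply, LinearMap.comp_apply, AlgEquiv.toLinearMap_apply,
      map_list_prod, List.map_ofFn]
    have hX : (⇑(SymmAlgebra.equivMvPolynomial b) ∘ fun i => ιS K L (b (g i))) = X ∘ g := by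
      funext i
      simp
    rw [hX, ← List.map_ofFn, prod_map_X]
    exact symmetrization_monomial_toFinsupp_ofFn b g
  simpa [F] using MultilinearMap.congr_fun hF x

end PBW

/-- **Poincaré–Birkhoff–Witt** (characteristic zero form): for a Lie algebra `g`
over a field of characteristic zero, the symmetrization map
`Φ : S(g) → U(g)`, `x₁⋯xₙ ↦ (1/n!) ∑_{σ} x_{σ(1)}⋯x_{σ(n)}`, is a linear
isomorphism. -/
theorem pbw_symmetrization_isomorphism (K : Type*) [Field K] [CharZero K]
    (L : Type*) [LieRing L] [LieAlgebra K L] :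
    ∃ Φ : SymmAlgebra K L ≃ₗ[K] UniversalEnvelopingAlgebra K L,
      IsSymmetrization K L Φ := by
  let _ : LinearOrder (Module.Basis.ofVectorSpaceIndex K L) :=
    IsWellOrder.linearOrder WellOrderingRel
  let b := Module.Basis.ofVectorSpace K L
  let e := SymmAlgebra.equivMvPolynomial b
  have hbij : Function.Bijective (PBW.symmetrization b ∘ₗ e.toLinearMap) :=
    ⟨(PBW.symmetrization_injective b).comp e.injective,
      (PBW.symmetrization_surjective b).comp e.surjective⟩
  refine ⟨LinearEquiv.ofBijective _ hbij, fun n x => ?_⟩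
  rw [LinearEquiv.ofBijective_apply, LinearMap.comp_apply, AlgEquiv.toLinearMap_apply,
    PBW.symmetrization_equivMvPolynomial_prod, PBW.symmetrize_apply]
  simp only [PBW.wordProd_ofFn, Function.comp_apply]
end
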